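/- Suppose ρ is a probability distribution stationary for W. Then for every t ≥ 0, every observable Q : K → ℝ, potential V : K → ℝ and constants a, b ∈ ℝ, the function h ↦ ∑_x ρ(x) (e^{t L_h} Q)(x) is differentiable at h = 0 (HasDerivAt) with derivative a [ ∑_x ρ(x) V(x) Q(x) − ∑_x ρ(x) V(x) (e^{tL} Q)(x) ] − b ∫_0^t ∑_x ρ(x) (L V)(x) (e^{uL} Q)(x) du. (Integrated stationary nonequilibrium response: the equilibrium expression is modified by the correlation with the systematic flux LV.) -/

import Mathlib

/-- The generator matrix of the Markov jump process with rates `W`: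
entry `W x y` at `(x, y)` for `x ≠ y` and `-∑_{y ≠ x} W x y` on the diagonal. -/
noncomputable def genMatrix {K : Type*} [Fintype K] [DecidableEq K] (W : K → K → ℝ) :
    Matrix K K ℝ :=
  Matrix.of fun x y =>
    if x = y then -∑ z ∈ Finset.univ.filter (fun z => z ≠ x), W x z else W x y

/-- The semigroup `e^{tL}` (matrix exponential of `t • L`). -/
noncomputable def expL {K : Type*} [Fintype K] [DecidableEq K] (W : K → K → ℝ) (t : ℝ) :
    Matrix K K ℝ :=
  NormedSpace.exp (t • genMatrix W)

/-- Action of `e^{tL}` on observables: `(e^{tL} f)(x) = ∑ y, (e^{tL})_{x,y} f y`. -/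
noncomputable def actE {K : Type*} [Fintype K] [DecidableEq K] (W : K → K → ℝ) (t : ℝ)
    (f : K → ℝ) : K → ℝ :=
  fun x => ∑ y, expL W t x y * f y

/-- Action of `e^{tL}` on distributions: `(μ e^{tL})(x) = ∑ z, μ z (e^{tL})_{z,x}`. -/
noncomputable def muE {K : Type*} [Fintype K] [DecidableEq K] (W : K → K → ℝ) (μ : K → ℝ)
    (t : ℝ) : K → ℝ :=
  fun x => ∑ z, μ z * expL W t z x

/-- The backward generator acting on observables. -/
noncomputable def genL {K : Type*} [Fintype K] (W : K → K → ℝ) (f : K → ℝ) : K → ℝ :=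
  fun x => ∑ y, W x y * (f y - f x)

/-- The linearized perturbation operator
`(L' f)(x) = ∑ y, W x y * (b V y - a V x) * (f y - f x)`. -/
noncomputable def genL' {K : Type*} [Fintype K] (W : K → K → ℝ) (V : K → ℝ) (a b : ℝ)
    (f : K → ℝ) : K → ℝ :=
  fun x => ∑ y, W x y * (b * V y - a * V x) * (f y - f x)

/-- The perturbed rates `W_h x y = W x y * exp (h (b V y - a V x))`. -/
noncomputable def pertW {K : Type*} (W : K → K → ℝ) (V : K → ℝ) (a b h : ℝ) :
    K → K → ℝ :=
  fun x y => W x y * Real.exp (h * (b * V y - a * V x))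

/-!
Write `L_h` for the generator of the perturbed rates, so that `L_0 = L` and `h ↦ L_h` is
differentiable with derivative `L'` at `0`, the generator of the rates
`W x y * (b V y - a V x)`. Duhamel's formula
`e^{tA} - e^{tC} = ∫₀ᵗ e^{sA} (A - C) e^{(t-s)C} ds` identifies the derivative of
`h ↦ ρ e^{t L_h} Q` at `0` with `∫₀ᵗ ρ e^{sL} L' e^{(t-s)L} Q ds`. Stationarity removes `e^{sL}`,
and since `ρ L (V g) = 0` we get `ρ L' g = -b ρ (LV · g) - a ρ (V · L g)`; with `g = e^{uL} Q`,
the backward equation `∂ᵤ e^{uL} Q = L e^{uL} Q` integrates the `a`-term.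
-/

open NormedSpace Finset
open scoped Matrix

section Duhamel

variable {𝔸 : Type*} [NormedRing 𝔸] [NormedAlgebra ℝ 𝔸] [CompleteSpace 𝔸]

@[fun_prop]
theorem continuous_exp_of_real : Continuous (exp : 𝔸 → 𝔸) :=
  letI := NormedAlgebra.restrictScalars ℚ ℝ 𝔸
  exp_continuous

theorem exp_smul_sub_exp_smul (A C : 𝔸) (t : ℝ) :
    exp (t • A) - exp (t • C) = ∫ s in (0:ℝ)..t, exp (s • A) * (A - C) * exp ((t - s) • C) := by
  have hC : ∀ s : ℝ, HasDerivAt (fun s : ℝ => exp ((t - s) • C)) (-(C * exp ((t - s) • C))) s := by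
    intro s
    simpa [Function.comp_def] using
      (hasDerivAt_exp_smul_const' C (t - s)).scomp s ((hasDerivAt_id s).const_sub t)
  have hderiv : ∀ s ∈ Set.uIcc (0:ℝ) t, HasDerivAt (fun s : ℝ => exp (s • A) * exp ((t - s) • C))
      (exp (s • A) * (A - C) * exp ((t - s) • C)) s := by
    intro s _
    convert (hasDerivAt_exp_smul_const A s).fun_mul (hC s) using 1
    rw [mul_neg, ← mul_assoc, ← sub_eq_add_neg, mul_sub, sub_mul]
  have hcont : Continuous fun s : ℝ => exp (s • A) * (A - C) * exp ((t - s) • C) := by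
    fun_prop
  rw [intervalIntegral.integral_eq_sub_of_hasDerivAt hderiv (hcont.intervalIntegrable 0 t)]
  simp

theorem hasDerivAt_exp_smul_comp {A : ℝ → 𝔸} {A' : 𝔸} {r : ℝ} (hA : Continuous A)
    (hA' : HasDerivAt A A' r) (t : ℝ) :
    HasDerivAt (fun h => exp (t • A h))
      (∫ s in (0:ℝ)..t, exp (s • A r) * A' * exp ((t - s) • A r)) r := by
  -- The slope at `h` is the Duhamel integral with `dslope A r h` in place of `A'`.
  set F : ℝ → 𝔸 := fun h =>
    ∫ s in (0:ℝ)..t, exp (s • A h) * dslope A r h * exp ((t - s) • A r)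
  have hslope : Continuous (dslope A r) :=
    (continuousOn_univ.symm.trans (continuousOn_dslope Filter.univ_mem)).2
      ⟨hA.continuousOn, hA'.differentiableAt⟩
  have hF : Continuous F := by
    apply intervalIntegral.continuous_parametric_intervalIntegral_of_continuous' _ 0 t
    fun_prop
  have hFr : F r = ∫ s in (0:ℝ)..t, exp (s • A r) * A' * exp ((t - s) • A r) := by
    simp only [F, dslope_same, hA'.deriv]
  rw [hasDerivAt_iff_tendsto_slope, ← hFr]
  refine ((hF.tendsto r).mono_left nhdsWithin_le_nhds).congr' ?_
  filter_upwards [self_mem_nhdsWithin] with h hh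
  rw [slope_def_module, exp_smul_sub_exp_smul, ← sub_smul_dslope A r h]
  simp only [mul_smul_comm, smul_mul_assoc, intervalIntegral.integral_smul]
  rw [inv_smul_smul₀ (sub_ne_zero.2 hh)]

theorem map_exp_smul_mul_of_map_mul_eq_zero {F : Type*} [NormedAddCommGroup F] [NormedSpace ℝ F]
    (ℓ : 𝔸 →L[ℝ] F) {a : 𝔸} (ha : ∀ x, ℓ (a * x) = 0) (s : ℝ) (x : 𝔸) :
    ℓ (exp (s • a) * x) = ℓ x := by
  have hderiv : ∀ u : ℝ, HasDerivAt (fun u : ℝ => ℓ (exp (u • a) * x)) 0 u := fun u => by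
    simpa [Function.comp_def, mul_assoc, ha] using
      ℓ.hasFDerivAt.comp_hasDerivAt u ((hasDerivAt_exp_smul_const' a u).mul_const x)
  have := is_const_of_deriv_eq_zero (fun u => (hderiv u).differentiableAt)
    (fun u => (hderiv u).deriv) s 0
  simpa using this

end Duhamel

-- Any submultiplicative norm would do: it makes `Matrix K K ℝ` a Banach algebra.
attribute [local instance] Matrix.linftyOpNormedAddCommGroup Matrix.linftyOpNormedRing
  Matrix.linftyOpNormedAlgebra

section Generator

variable {K : Type*} [Fintype K]

theorem genMatrix_mulVec [DecidableEq K] (W : K → K → ℝ) (f : K → ℝ) :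
    genMatrix W *ᵥ f = genL W f := by
  funext x
  have hoff : ∑ y ∈ univ.erase x, W x y * (f y - f x) = genL W f x :=
    sum_erase _ (by rw [sub_self, mul_zero])
  have hrow : ∑ y ∈ univ.erase x, genMatrix W x y * f y = ∑ y ∈ univ.erase x, W x y * f y :=
    sum_congr rfl fun y hy => by simp [genMatrix, (ne_of_mem_erase hy).symm]
  rw [← hoff, Matrix.mulVec, dotProduct, ← add_sum_erase _ _ (mem_univ x), hrow]
  simp only [genMatrix, Matrix.of_apply, if_true, filter_ne', mul_sub, sum_sub_distrib, ← sum_mul]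
  ring

noncomputable def genMatrixCLM [DecidableEq K] : (K → K → ℝ) →L[ℝ] Matrix K K ℝ :=
  LinearMap.toContinuousLinearMap
    { toFun := genMatrix
      map_add' W W' := by
        ext x y
        by_cases h : x = y <;> simp [genMatrix, h, sum_add_distrib, add_comm]
      map_smul' c W := by
        ext x y
        by_cases h : x = y <;> simp [genMatrix, h, mul_sum] }

noncomputable def pairingCLM (w f : K → ℝ) : Matrix K K ℝ →L[ℝ] ℝ :=
  LinearMap.toContinuousLinearMap
    { toFun X := w ⬝ᵥ (X *ᵥ f)
      map_add' X Y := by simp [Matrix.add_mulVec, dotProduct_add]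
      map_smul' c X := by simp [Matrix.smul_mulVec, dotProduct_smul] }

theorem pairingCLM_apply (w f : K → ℝ) (X : Matrix K K ℝ) :
    pairingCLM w f X = w ⬝ᵥ (X *ᵥ f) := rfl

theorem pairingCLM_genMatrix_mul [DecidableEq K] (W : K → K → ℝ) (w f : K → ℝ)
    (X : Matrix K K ℝ) :
    pairingCLM w f (genMatrix W * X) = ∑ x, w x * genL W (X *ᵥ f) x := by
  rw [pairingCLM_apply, ← Matrix.mulVec_mulVec, genMatrix_mulVec]
  rfl

@[fun_prop]
theorem continuous_actE [DecidableEq K] (W : K → K → ℝ) (f : K → ℝ) (x : K) :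
    Continuous fun u => actE W u f x := by
  unfold actE expL
  fun_prop

theorem actE_zero [DecidableEq K] (W : K → K → ℝ) (f : K → ℝ) :
    actE W 0 f = f := by
  funext x
  simp [actE, expL, Matrix.one_apply]

theorem hasDerivAt_sum_mul_actE [DecidableEq K] (W : K → K → ℝ) (w f : K → ℝ) (u : ℝ) :
    HasDerivAt (fun u => ∑ x, w x * actE W u f x) (∑ x, w x * genL W (actE W u f) x) u :=
  ((pairingCLM w f).hasFDerivAt.comp_hasDerivAt u
    (hasDerivAt_exp_smul_const' (genMatrix W) u)).congr_deriv
    (pairingCLM_genMatrix_mul _ _ _ _)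

theorem integral_sum_mul_genL_actE [DecidableEq K] (W : K → K → ℝ) (w f : K → ℝ) (t : ℝ) :
    ∫ u in (0:ℝ)..t, ∑ x, w x * genL W (actE W u f) x
      = ∑ x, w x * actE W t f x - ∑ x, w x * f x := by
  have hcont : Continuous fun u => ∑ x, w x * genL W (actE W u f) x := by
    simp only [genL]
    fun_prop
  rw [intervalIntegral.integral_eq_sub_of_hasDerivAt
    (fun u _ => hasDerivAt_sum_mul_actE W w f u) (hcont.intervalIntegrable 0 t)]
  simp [actE_zero]

end Generator

section Perturbation

variable {K : Type*}

theorem pertW_zero (W : K → K → ℝ) (V : K → ℝ) (a b : ℝ) : pertW W V a b 0 = W := by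
  funext x y
  simp [pertW]

theorem continuous_pertW (W : K → K → ℝ) (V : K → ℝ) (a b : ℝ) :
    Continuous fun h => pertW W V a b h := by
  unfold pertW
  fun_prop

theorem hasDerivAt_pertW [Fintype K] (W : K → K → ℝ) (V : K → ℝ) (a b h : ℝ) :
    HasDerivAt (fun h => pertW W V a b h)
      (fun x y => pertW W V a b h x y * (b * V y - a * V x)) h := by
  refine hasDerivAt_pi.2 fun x => hasDerivAt_pi.2 fun y => ?_
  simpa [pertW, mul_assoc] using
    (((hasDerivAt_id h).mul_const (b * V y - a * V x)).exp).const_mul (W x y)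

theorem continuous_genMatrix_pertW [Fintype K] [DecidableEq K] (W : K → K → ℝ) (V : K → ℝ)
    (a b : ℝ) : Continuous fun h => genMatrix (pertW W V a b h) :=
  genMatrixCLM.continuous.comp (continuous_pertW W V a b)

theorem hasDerivAt_genMatrix_pertW_zero [Fintype K] [DecidableEq K] (W : K → K → ℝ)
    (V : K → ℝ) (a b : ℝ) :
    HasDerivAt (fun h => genMatrix (pertW W V a b h))
      (genMatrix fun x y => W x y * (b * V y - a * V x)) 0 := by
  have := genMatrixCLM.hasFDerivAt.comp_hasDerivAt 0 (hasDerivAt_pertW W V a b 0)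
  rwa [pertW_zero] at this

end Perturbation

section Stationary

variable {K : Type*} [Fintype K]

def IsStationaryFor (W : K → K → ℝ) (ρ : K → ℝ) : Prop :=
  ∀ f : K → ℝ, ∑ x, ρ x * genL W f x = 0

variable {W : K → K → ℝ} {ρ : K → ℝ}

theorem IsStationaryFor.sum_mul_genL' (hρ : IsStationaryFor W ρ) (V : K → ℝ) (a b : ℝ)
    (f : K → ℝ) :
    ∑ x, ρ x * genL' W V a b f x
      = -(b * ∑ x, ρ x * genL W V x * f x) - a * ∑ x, ρ x * V x * genL W f x := by
  have hprod : ∀ x, genL' W V a b f x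
      = b * (genL W (V * f) x - genL W V x * f x) - a * (V x * genL W f x) := fun x => by
    simp only [genL, genL', Pi.mul_apply, mul_sum, sum_mul, ← sum_sub_distrib]
    exact sum_congr rfl fun y _ => by ring
  have hVf := hρ (V * f)
  simp only [hprod, mul_sub, sum_sub_distrib, mul_left_comm (ρ _) b, mul_left_comm (ρ _) a,
    ← mul_sum, hVf]
  simp only [mul_assoc]
  ring

variable [DecidableEq K]

theorem IsStationaryFor.pairingCLM_exp_smul_mul (hρ : IsStationaryFor W ρ) (f : K → ℝ) (s : ℝ)
    (X : Matrix K K ℝ) : pairingCLM ρ f (exp (s • genMatrix W) * X) = pairingCLM ρ f X :=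
  map_exp_smul_mul_of_map_mul_eq_zero _
    (fun X => (pairingCLM_genMatrix_mul W ρ f X).trans (hρ _)) s X

theorem IsStationaryFor.pairingCLM_integral_duhamel (hρ : IsStationaryFor W ρ) (V Q : K → ℝ)
    (a b t : ℝ) :
    pairingCLM ρ Q (∫ s in (0:ℝ)..t, exp (s • genMatrix W)
        * genMatrix (fun x y => W x y * (b * V y - a * V x)) * exp ((t - s) • genMatrix W))
      = a * ((∑ x, ρ x * V x * Q x) - ∑ x, ρ x * V x * actE W t Q x)
        - b * ∫ u in (0:ℝ)..t, ∑ x, ρ x * genL W V x * actE W u Q x := by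
  set L := genMatrix W
  set L' := genMatrix fun x y => W x y * (b * V y - a * V x)
  have hcont : Continuous fun s : ℝ => exp (s • L) * L' * exp ((t - s) • L) := by fun_prop
  have hstep : ∀ s, pairingCLM ρ Q (exp (s • L) * L' * exp ((t - s) • L))
      = ∑ x, ρ x * genL' W V a b (actE W (t - s) Q) x := fun s => by
    rw [mul_assoc, hρ.pairingCLM_exp_smul_mul]
    exact pairingCLM_genMatrix_mul _ _ _ _
  have hLV : Continuous fun u => ∑ x, ρ x * genL W V x * actE W u Q x := by fun_prop
  have hLQ : Continuous fun u => ∑ x, ρ x * V x * genL W (actE W u Q) x := by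
    simp only [genL]
    fun_prop
  have hFTC := integral_sum_mul_genL_actE W (fun x => ρ x * V x) Q t
  calc pairingCLM ρ Q (∫ s in (0:ℝ)..t, exp (s • L) * L' * exp ((t - s) • L))
      = ∫ s in (0:ℝ)..t, pairingCLM ρ Q (exp (s • L) * L' * exp ((t - s) • L)) :=
        ((pairingCLM ρ Q).intervalIntegral_comp_comm (hcont.intervalIntegrable 0 t)).symm
    _ = ∫ s in (0:ℝ)..t, ∑ x, ρ x * genL' W V a b (actE W (t - s) Q) x :=
        intervalIntegral.integral_congr fun s _ => hstep s
    _ = ∫ u in (0:ℝ)..t, ∑ x, ρ x * genL' W V a b (actE W u Q) x := by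
        rw [intervalIntegral.integral_comp_sub_left
          (fun u => ∑ x, ρ x * genL' W V a b (actE W u Q) x), sub_self, sub_zero]
    _ = ∫ u in (0:ℝ)..t, (-(b * ∑ x, ρ x * genL W V x * actE W u Q x)
          - a * ∑ x, ρ x * V x * genL W (actE W u Q) x) := by
        simp only [hρ.sum_mul_genL']
    _ = _ := by
        rw [intervalIntegral.integral_sub (f := fun u => -(b * _)) (g := fun u => a * _)
          ((hLV.intervalIntegrable 0 t).const_mul b).neg
          ((hLQ.intervalIntegrable 0 t).const_mul a), intervalIntegral.integral_neg,
          intervalIntegral.integral_const_mul, intervalIntegral.integral_const_mul, hFTC]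
        ring

end Stationary

theorem integrated_stationary_response_general
    {K : Type*} [Fintype K] [DecidableEq K]
    (W : K → K → ℝ)
    (ρ : K → ℝ)
    (hstat : ∀ f : K → ℝ, ∑ x, ρ x * genL W f x = 0)
    (V Q : K → ℝ) (a b : ℝ) (t : ℝ) :
    HasDerivAt
      (fun h : ℝ => ∑ x, ρ x * ∑ y, expL (pertW W V a b h) t x y * Q y)
      (a * ((∑ x, ρ x * V x * Q x) - ∑ x, ρ x * V x * actE W t Q x)
        - b * ∫ u in (0:ℝ)..t, ∑ x, ρ x * genL W V x * actE W u Q x) 0 := by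
  have hexp := hasDerivAt_exp_smul_comp (continuous_genMatrix_pertW W V a b)
    (hasDerivAt_genMatrix_pertW_zero W V a b) t
  rw [pertW_zero] at hexp
  exact ((pairingCLM ρ Q).hasFDerivAt.comp_hasDerivAt 0 hexp).congr_deriv
    (IsStationaryFor.pairingCLM_integral_duhamel hstat V Q a b t)

/-- integrated stationary nonequilibrium response: if `ρ` is stationary
for `W`, then for every `t ≥ 0` the map `h ↦ ∑ x, ρ x * (e^{t L_h} Q) x` is
differentiable at `h = 0` with derivative
`a (⟨V(t)Q(t)⟩_ρ - ⟨V(0)Q(t)⟩_ρ) - b ∫_0^t ⟨(LV)(x_0) Q(x_u)⟩_ρ du`. -/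
theorem integrated_stationary_response
    {K : Type*} [Fintype K] [Nonempty K] [DecidableEq K]
    (W : K → K → ℝ) (hW : ∀ x y : K, x ≠ y → 0 ≤ W x y)
    (ρ : K → ℝ) (hρ0 : ∀ x, 0 ≤ ρ x) (hρ1 : ∑ x, ρ x = 1)
    (hstat : ∀ f : K → ℝ, ∑ x, ρ x * genL W f x = 0)
    (V Q : K → ℝ) (a b : ℝ) (t : ℝ) (ht : 0 ≤ t) :
    HasDerivAt
      (fun h : ℝ => ∑ x, ρ x * ∑ y, expL (pertW W V a b h) t x y * Q y)
      (a * ((∑ x, ρ x * V x * Q x) - ∑ x, ρ x * V x * actE W t Q x)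
        - b * ∫ u in (0:ℝ)..t, ∑ x, ρ x * genL W V x * actE W u Q x) 0 :=
  integrated_stationary_response_general W ρ hstat V Q a b t
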